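/- Let Y be a nonempty finite set and let P : Y × Y → ℝ be a preference model satisfying the linearity condition P(y₁, y₂) = 1 − P(y₂, y₁) for all y₁, y₂ ∈ Y. Then there exists a mixed policy μ* (a probability distribution on Y) such that for every mixed policy ν on Y, the extended preference satisfies P̄(μ*, ν) = Σ_{y₁,y₂} μ*(y₁) ν(y₂) P(y₁, y₂) ≥ 1/2; i.e., μ* is weakly preferred to every policy. -/

import Mathlib

/-- A mixed policy on a finite set `Y`: a probability distribution on `Y`. -/
def IsMixed {Y : Type*} [Fintype Y] (μ : Y → ℝ) : Prop :=
  (∀ y, 0 ≤ μ y) ∧ ∑ y, μ y = 1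

/-- The extended preference of policy `μ` over policy `ν` for a preference model `P`. -/
def extPref {Y : Type*} [Fintype Y] (P : Y → Y → ℝ) (μ ν : Y → ℝ) : ℝ :=
  ∑ y₁, ∑ y₂, μ y₁ * ν y₂ * P y₁ y₂

/-! Shifting `P` by `1 / 2` turns it into a skew-symmetric matrix `A`, and it suffices to find `μ`
in the simplex with `μ ᵥ* A ≥ 0`. If there were none, the compact convex image of the simplex under
`μ ↦ μ ᵥ* A` would miss the nonnegative orthant, and Farkas' lemma would give a nonzero `q ≥ 0`
with `μ ᵥ* A ⬝ᵥ q < 0` on the whole simplex. Taking `μ` proportional to `q` is impossible, since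
skew-symmetry forces `q ᵥ* A ⬝ᵥ q = 0`. -/

open Matrix

theorem inv_sum_smul_mem_stdSimplex {𝕜 ι : Type*} [Field 𝕜] [LinearOrder 𝕜]
    [IsStrictOrderedRing 𝕜] [Fintype ι] {q : ι → 𝕜} (hq : 0 ≤ q)
    (hq₀ : q ≠ 0) : (∑ i, q i)⁻¹ • q ∈ stdSimplex 𝕜 ι := by
  have hsum : ∑ i, q i ≠ 0 := fun h ↦ hq₀ <| funext fun i ↦
    (Finset.sum_eq_zero_iff_of_nonneg fun i _ ↦ hq i).1 h i (Finset.mem_univ i)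
  refine ⟨fun i ↦ smul_nonneg (inv_nonneg.2 (Finset.sum_nonneg fun i _ ↦ hq i)) (hq i), ?_⟩
  simp only [Pi.smul_apply, smul_eq_mul, ← Finset.mul_sum, inv_mul_cancel₀ hsum]

theorem Matrix.vecMul_dotProduct_self_of_transpose_eq_neg {𝕜 n : Type*} [Field 𝕜]
    [LinearOrder 𝕜] [IsStrictOrderedRing 𝕜] [Fintype n] {A : Matrix n n 𝕜} (hA : Aᵀ = -A)
    (q : n → 𝕜) : q ᵥ* A ⬝ᵥ q = 0 := by
  have h : q ᵥ* A ⬝ᵥ q = -(q ᵥ* A ⬝ᵥ q) := by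
    conv_lhs => rw [← dotProduct_mulVec, ← vecMul_transpose, hA, vecMul_neg, dotProduct_neg,
      dotProduct_comm]
  linarith

theorem StrongDual.apply_eq_dotProduct {ι : Type*} [Fintype ι] [DecidableEq ι]
    (f : StrongDual ℝ (ι → ℝ)) (x : ι → ℝ) :
    f x = x ⬝ᵥ fun i ↦ f fun j ↦ if i = j then 1 else 0 :=
  LinearMap.pi_apply_eq_sum_univ (f : (ι → ℝ) →ₗ[ℝ] ℝ) x

theorem Matrix.exists_mem_stdSimplex_nonneg_vecMul_of_transpose_eq_neg {n : Type*} [Fintype n]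
    [Nonempty n] {A : Matrix n n ℝ} (hA : Aᵀ = -A) : ∃ μ ∈ stdSimplex ℝ n, 0 ≤ μ ᵥ* A := by
  classical
  by_contra! h
  have hdisj : Disjoint (vecMulLinear A '' stdSimplex ℝ n) (ProperCone.positive ℝ (n → ℝ)) :=
    Set.disjoint_left.2 <| by
      rintro _ ⟨μ, hμ, rfl⟩ hpos
      exact h μ hμ hpos
  obtain ⟨f, hf_nonneg, hf_neg⟩ := (ProperCone.positive ℝ (n → ℝ)).hyperplane_separation
    ((convex_stdSimplex ℝ n).linear_image _)
    ((isCompact_stdSimplex ℝ n).image (vecMulLinear A).continuous_of_finiteDimensional) hdisj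
  set q : n → ℝ := fun i ↦ f fun j ↦ if i = j then 1 else 0
  have hq : 0 ≤ q := fun i ↦ hf_nonneg _ fun j ↦ by positivity
  have hneg : ∀ μ ∈ stdSimplex ℝ n, μ ᵥ* A ⬝ᵥ q < 0 := fun μ hμ ↦ by
    rw [← StrongDual.apply_eq_dotProduct]
    exact hf_neg _ ⟨μ, hμ, rfl⟩
  have hq₀ : q ≠ 0 := fun hq₀ ↦ by
    obtain ⟨i⟩ := ‹Nonempty n›
    simpa [hq₀] using hneg _ (ite_eq_mem_stdSimplex ℝ i)
  have hq_neg := hneg _ (inv_sum_smul_mem_stdSimplex hq hq₀)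
  rw [smul_vecMul, smul_dotProduct, vecMul_dotProduct_self_of_transpose_eq_neg hA,
    smul_zero] at hq_neg
  exact hq_neg.false

theorem isMixed_iff_mem_stdSimplex {Y : Type*} [Fintype Y] {μ : Y → ℝ} :
    IsMixed μ ↔ μ ∈ stdSimplex ℝ Y :=
  Iff.rfl

theorem extPref_eq_vecMul_dotProduct {Y : Type*} [Fintype Y] (P : Y → Y → ℝ) (μ ν : Y → ℝ) :
    extPref P μ ν = μ ᵥ* of P ⬝ᵥ ν := by
  simp only [extPref, dotProduct, vecMul, of_apply, Finset.sum_mul]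
  rw [Finset.sum_comm]
  exact Finset.sum_congr rfl fun _ _ ↦ Finset.sum_congr rfl fun _ _ ↦ by ring

theorem extPref_sub_const {Y : Type*} [Fintype Y] (P : Y → Y → ℝ) (c : ℝ) {μ ν : Y → ℝ}
    (hμ : ∑ y, μ y = 1) (hν : ∑ y, ν y = 1) :
    extPref (fun y₁ y₂ ↦ P y₁ y₂ - c) μ ν = extPref P μ ν - c := by
  simp only [extPref, mul_sub, Finset.sum_sub_distrib, ← Finset.sum_mul, ← Finset.mul_sum, hμ, hν]
  ring

/-- Existence part of Theorem 1: for a preference model satisfying the linearity condition,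
there exists a mixed policy weakly preferred to every mixed policy. -/
theorem exists_maximin_policy {Y : Type*} [Fintype Y] [Nonempty Y]
    (P : Y → Y → ℝ) (hP : ∀ y₁ y₂, P y₁ y₂ = 1 - P y₂ y₁) :
    ∃ μstar : Y → ℝ, IsMixed μstar ∧
      ∀ ν : Y → ℝ, IsMixed ν → (1 : ℝ) / 2 ≤ extPref P μstar ν := by
  let A : Matrix Y Y ℝ := of fun y₁ y₂ ↦ P y₁ y₂ - 1 / 2
  have hA : Aᵀ = -A := by
    ext y₁ y₂
    simp only [A, transpose_apply, Matrix.neg_apply, of_apply, hP y₂ y₁]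
    ring
  obtain ⟨μ, hμ, hμA⟩ := A.exists_mem_stdSimplex_nonneg_vecMul_of_transpose_eq_neg hA
  refine ⟨μ, isMixed_iff_mem_stdSimplex.2 hμ, fun ν hν ↦ ?_⟩
  have hshift := extPref_sub_const P (1 / 2) hμ.2 hν.2
  rw [extPref_eq_vecMul_dotProduct] at hshift
  linarith [dotProduct_nonneg_of_nonneg hμA hν.1]
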